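/- Let ρ ∈ (0,1) and let S ∈ ℝ^{m×n} be any matrix such that ‖C_S − I_d‖₂ ≤ √ρ. Let C_S = Σ_{i=1}^d λ_i v_i v_iᵀ be an eigenvalue decomposition of C_S and, for x_0 ∈ ℝ^d, set ξ_i = ⟨v_i, H^{1/2}(x_0 − x*)⟩. Then for every t ≥ 0, (1/2) · min over real polynomials Q of degree at most t with Q(0)=1 of Σ_{i=1}^d Q(1/λ_i)² ξ_i² is at most 4 · ((1 − √(1−ρ))/(1 + √(1−ρ)))^t · δ_{x_0}. -/

import Mathlib

open Matrix MeasureTheory ProbabilityTheory Real Polynomial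
open scoped Classical

noncomputable section

/-- Spectral (operator) norm of a real matrix, via its action on Euclidean space. -/
def matSpectralNorm {k l : ℕ} (M : Matrix (Fin k) (Fin l) ℝ) : ℝ :=
  ‖LinearMap.toContinuousLinearMap (Matrix.toEuclideanLin M)‖

/-- Positive semidefinite square root of a matrix (junk value `0` if `M` is not
positive semidefinite). -/
def msqrt {d : ℕ} (M : Matrix (Fin d) (Fin d) ℝ) : Matrix (Fin d) (Fin d) ℝ :=
  if h : M.PosSemidef then
    (h.1.eigenvectorUnitary : Matrix (Fin d) (Fin d) ℝ) *
      diagonal (Real.sqrt ∘ h.1.eigenvalues) *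
      (star h.1.eigenvectorUnitary : Matrix (Fin d) (Fin d) ℝ)
  else 0

/-- The Hessian `H = Aᵀ A + ν² Λ`. -/
def Hmat {n d : ℕ} (A : Matrix (Fin n) (Fin d) ℝ) (ν : ℝ)
    (Λ : Matrix (Fin d) (Fin d) ℝ) : Matrix (Fin d) (Fin d) ℝ :=
  Aᵀ * A + ν ^ 2 • Λ

/-- The sketched Hessian `H_S = Aᵀ Sᵀ S A + ν² Λ`. -/
def HSmat {n d m : ℕ} (A : Matrix (Fin n) (Fin d) ℝ) (ν : ℝ)
    (Λ : Matrix (Fin d) (Fin d) ℝ) (S : Matrix (Fin m) (Fin n) ℝ) :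
    Matrix (Fin d) (Fin d) ℝ :=
  Aᵀ * Sᵀ * S * A + ν ^ 2 • Λ

/-- `C_S = H^{-1/2} H_S H^{-1/2}`. -/
def CSmat {n d m : ℕ} (A : Matrix (Fin n) (Fin d) ℝ) (ν : ℝ)
    (Λ : Matrix (Fin d) (Fin d) ℝ) (S : Matrix (Fin m) (Fin n) ℝ) :
    Matrix (Fin d) (Fin d) ℝ :=
  (msqrt (Hmat A ν Λ))⁻¹ * HSmat A ν Λ S * (msqrt (Hmat A ν Λ))⁻¹

/-- The minimizer `x* = H⁻¹ b`. -/
def xstar {n d : ℕ} (A : Matrix (Fin n) (Fin d) ℝ) (ν : ℝ)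
    (Λ : Matrix (Fin d) (Fin d) ℝ) (b : Fin d → ℝ) : Fin d → ℝ :=
  (Hmat A ν Λ)⁻¹.mulVec b

/-- The gradient `∇f(x) = H x - b`. -/
def gradf {n d : ℕ} (A : Matrix (Fin n) (Fin d) ℝ) (ν : ℝ)
    (Λ : Matrix (Fin d) (Fin d) ℝ) (b : Fin d → ℝ) (x : Fin d → ℝ) : Fin d → ℝ :=
  (Hmat A ν Λ).mulVec x - b

/-- The exact error `δ_x = (1/2)(x - x*)ᵀ H (x - x*)`. -/
def deltaEx {n d : ℕ} (A : Matrix (Fin n) (Fin d) ℝ) (ν : ℝ)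
    (Λ : Matrix (Fin d) (Fin d) ℝ) (b : Fin d → ℝ) (x : Fin d → ℝ) : ℝ :=
  (1 / 2) * ((x - xstar A ν Λ b) ⬝ᵥ (Hmat A ν Λ).mulVec (x - xstar A ν Λ b))

/-- The approximate Newton decrement `δ̃_x = (1/2) ∇f(x)ᵀ H_S⁻¹ ∇f(x)`. -/
def deltaApx {n d m : ℕ} (A : Matrix (Fin n) (Fin d) ℝ) (ν : ℝ)
    (Λ : Matrix (Fin d) (Fin d) ℝ) (b : Fin d → ℝ)
    (S : Matrix (Fin m) (Fin n) ℝ) (x : Fin d → ℝ) : ℝ :=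
  (1 / 2) * (gradf A ν Λ b x ⬝ᵥ (HSmat A ν Λ S)⁻¹.mulVec (gradf A ν Λ b x))

/-!
Since `‖C_S - I‖ ≤ √ρ`, every eigenvalue `λ_i` of `C_S` lies in `[1 - √ρ, 1 + √ρ]`, so `1/λ_i`
lies in `[α, β] = [1/(1 + √ρ), 1/(1 - √ρ)]`. The shifted and rescaled Chebyshev polynomial
`Q(x) = T_t((β + α - 2x)/(β - α)) / T_t((β + α)/(β - α))` has `Q(0) = 1` and
`|Q| ≤ 2((√β - √α)/(√β + √α))^t` on `[α, β]`, because `T_t((q + q⁻¹)/2) = cosh (t log q) ≥ q^t/2`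
for `q = (√β + √α)/(√β - √α)`, whose `(q + q⁻¹)/2` is `(β + α)/(β - α)`. For these endpoints
`((√β - √α)/(√β + √α))² = (1 - √(1 - ρ))/(1 + √(1 - ρ))`. Since the `v_i` are orthonormal,
`Σ ξ_i² = ‖H^{1/2}(x₀ - x*)‖² = 2 δ_{x₀}`, which gives the bound.
-/

lemma Polynomial.Chebyshev.pow_le_two_mul_eval_T {q : ℝ} (hq : 0 < q) (t : ℕ) :
    q ^ t ≤ 2 * (T ℝ t).eval ((q + q⁻¹) / 2) := by
  have hcosh : (q + q⁻¹) / 2 = cosh (log q) := by rw [cosh_eq, exp_neg, exp_log hq]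
  calc q ^ t = exp (t * log q) := by rw [exp_nat_mul, exp_log hq]
    _ ≤ exp (t * log q) + exp (-(t * log q)) := le_add_of_nonneg_right (exp_pos _).le
    _ = 2 * (T ℝ t).eval ((q + q⁻¹) / 2) := by
      rw [hcosh, T_real_cosh, cosh_eq]
      push_cast
      ring

theorem exists_natDegree_le_eval_zero_eq_one_abs_eval_le {α β : ℝ} (hα : 0 < α) (hαβ : α < β)
    (t : ℕ) :
    ∃ Q : ℝ[X], Q.natDegree ≤ t ∧ Q.eval 0 = 1 ∧
      ∀ x ∈ Set.Icc α β, |Q.eval x| ≤ 2 * ((√β - √α) / (√β + √α)) ^ t := by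
  have ha : 0 < √α := sqrt_pos.2 hα
  have hab : √α < √β := sqrt_lt_sqrt hα.le hαβ
  have hα2 := sq_sqrt hα.le
  have hβ2 := sq_sqrt (hα.trans hαβ).le
  generalize √α = a at *
  generalize √β = b at *
  subst hα2 hβ2
  have hd : 0 < b ^ 2 - a ^ 2 := by linarith
  have hq : 0 < (b + a) / (b - a) := by apply div_pos <;> linarith
  have hz : ((b + a) / (b - a) + ((b + a) / (b - a))⁻¹) / 2 = (b ^ 2 + a ^ 2) / (b ^ 2 - a ^ 2) := by
    have : b - a ≠ 0 := by linarith
    have : b + a ≠ 0 := by linarith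
    field_simp
    ring
  set c := (Chebyshev.T ℝ t).eval ((b ^ 2 + a ^ 2) / (b ^ 2 - a ^ 2))
  have hc : ((b + a) / (b - a)) ^ t ≤ 2 * c := by
    simpa only [hz] using Chebyshev.pow_le_two_mul_eval_T hq t
  have hc0 : 0 < c := by linarith [pow_pos hq t]
  set L : ℝ[X] := C ((b ^ 2 + a ^ 2) / (b ^ 2 - a ^ 2)) - C (2 / (b ^ 2 - a ^ 2)) * X
  have hL : L.natDegree ≤ 1 := by
    simp only [L]
    compute_degree
  refine ⟨C c⁻¹ * (Chebyshev.T ℝ t).comp L, ?_, by simp [L, c, hc0.ne'], fun x hx => ?_⟩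
  · calc (C c⁻¹ * (Chebyshev.T ℝ t).comp L).natDegree
        ≤ (Chebyshev.T ℝ t).natDegree * L.natDegree :=
          (natDegree_C_mul_le _ _).trans natDegree_comp_le
      _ ≤ t * 1 := by gcongr; simp [Chebyshev.natDegree_T]
      _ = t := mul_one t
  have hLx : |L.eval x| ≤ 1 := by
    simp only [L, eval_sub, eval_C, eval_mul, eval_X]
    rw [abs_le, div_mul_eq_mul_div, div_sub_div_same, le_div_iff₀ hd, div_le_iff₀ hd]
    constructor <;> linarith [hx.1, hx.2]
  calc |(C c⁻¹ * (Chebyshev.T ℝ t).comp L).eval x|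
      = c⁻¹ * |(Chebyshev.T ℝ t).eval (L.eval x)| := by simp [abs_mul, abs_of_pos hc0]
    _ ≤ c⁻¹ :=
      mul_le_of_le_one_right (inv_pos.2 hc0).le (Chebyshev.abs_eval_T_real_le_one _ hLx)
    _ ≤ (((b + a) / (b - a)) ^ t / 2)⁻¹ := inv_anti₀ (by positivity) (by linarith)
    _ = 2 * ((b - a) / (b + a)) ^ t := by rw [inv_div, div_eq_mul_inv, ← inv_pow, inv_div]

theorem exists_natDegree_le_eval_zero_eq_one_sq_eval_inv_le {ρ : ℝ} (hρ : ρ ∈ Set.Ioo (0 : ℝ) 1)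
    (t : ℕ) :
    ∃ Q : ℝ[X], Q.natDegree ≤ t ∧ Q.eval 0 = 1 ∧ ∀ μ : ℝ, |μ - 1| ≤ √ρ →
      (Q.eval μ⁻¹) ^ 2 ≤ 4 * ((1 - √(1 - ρ)) / (1 + √(1 - ρ))) ^ t := by
  obtain ⟨hρ0, hρ1⟩ := hρ
  have hs0 : 0 < √ρ := sqrt_pos.2 hρ0
  have hs1 : √ρ < 1 := by rw [sqrt_lt' one_pos]; linarith
  obtain ⟨Q, hdeg, hQ0, hQ⟩ := exists_natDegree_le_eval_zero_eq_one_abs_eval_le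
    (α := (1 + √ρ)⁻¹) (β := (1 - √ρ)⁻¹) (by positivity)
    (inv_strictAnti₀ (by linarith) (by linarith)) t
  refine ⟨Q, hdeg, hQ0, fun μ hμ => ?_⟩
  obtain ⟨hμlo, hμhi⟩ := abs_le.1 hμ
  have hx : μ⁻¹ ∈ Set.Icc (1 + √ρ)⁻¹ (1 - √ρ)⁻¹ :=
    ⟨inv_anti₀ (by linarith) (by linarith), inv_anti₀ (by linarith) (by linarith)⟩
  have hratio : ((√(1 - √ρ)⁻¹ - √(1 + √ρ)⁻¹) / (√(1 - √ρ)⁻¹ + √(1 + √ρ)⁻¹)) ^ 2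
      = (1 - √(1 - ρ)) / (1 + √(1 - ρ)) := by
    have hw : 0 < √(1 - ρ) := sqrt_pos.2 (by linarith)
    have hinv : (1 + √ρ)⁻¹ * (1 - √ρ)⁻¹ = (1 - ρ)⁻¹ := by
      rw [← mul_inv]
      congr 1
      linear_combination -sq_sqrt hρ0.le
    have hab : √(1 + √ρ)⁻¹ * √(1 - √ρ)⁻¹ * √(1 - ρ) = 1 := by
      rw [← sqrt_mul (by positivity), hinv, sqrt_inv, inv_mul_cancel₀ hw.ne']
    have ha : √(1 + √ρ)⁻¹ ^ 2 * (1 + √ρ) = 1 := by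
      rw [sq_sqrt (by positivity), inv_mul_cancel₀ (by positivity)]
    have hb : √(1 - √ρ)⁻¹ ^ 2 * (1 - √ρ) = 1 := by
      rw [sq_sqrt (inv_pos.2 (by linarith)).le, inv_mul_cancel₀ (by linarith)]
    rw [div_pow, div_eq_div_iff (by positivity) (by positivity)]
    generalize √(1 + √ρ)⁻¹ = a at *
    generalize √(1 - √ρ)⁻¹ = b at *
    generalize √(1 - ρ) = w at *
    -- the two sides differ by `2w(a² + b²) - 4ab`, and `a² + b² = 2a²b²`, `abw = 1`
    linear_combination (4 * a * b) * hab - (2 * w * a ^ 2) * hb - (2 * w * b ^ 2) * ha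
  calc (Q.eval μ⁻¹) ^ 2 = |Q.eval μ⁻¹| ^ 2 := (sq_abs _).symm
    _ ≤ (2 * ((√(1 - √ρ)⁻¹ - √(1 + √ρ)⁻¹) / (√(1 - √ρ)⁻¹ + √(1 + √ρ)⁻¹)) ^ t) ^ 2 := by
      gcongr
      exact hQ _ hx
    _ = 4 * ((1 - √(1 - ρ)) / (1 + √(1 - ρ))) ^ t := by
      rw [mul_pow, ← pow_mul, mul_comm t, pow_mul, hratio]
      norm_num

lemma abs_le_matSpectralNorm_of_mulVec_eq_smul {k : ℕ} {M : Matrix (Fin k) (Fin k) ℝ}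
    {v : Fin k → ℝ} (hv : v ⬝ᵥ v = 1) {μ : ℝ} (h : M *ᵥ v = μ • v) :
    |μ| ≤ matSpectralNorm M := by
  set e : EuclideanSpace ℝ (Fin k) := WithLp.toLp 2 v
  have he : ‖e‖ = 1 := by
    rw [← pow_eq_one_iff_of_nonneg (norm_nonneg e) two_ne_zero, ← real_inner_self_eq_norm_sq,
      EuclideanSpace.inner_eq_star_dotProduct]
    simpa [e] using hv
  have happ : LinearMap.toContinuousLinearMap (Matrix.toEuclideanLin M) e = μ • e := by
    simp [e, h]
  unfold matSpectralNorm
  simpa [happ, norm_smul, he] using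
    (LinearMap.toContinuousLinearMap (Matrix.toEuclideanLin M)).le_opNorm e

lemma mulVec_dotProduct_mulVec_self {ι κ : Type*} [Fintype ι] [Fintype κ]
    (B : Matrix ι κ ℝ) (u : κ → ℝ) :
    (B *ᵥ u) ⬝ᵥ (B *ᵥ u) = u ⬝ᵥ (Bᵀ * B) *ᵥ u := by
  rw [← mulVec_mulVec, dotProduct_mulVec u, vecMul_transpose]

section Orthonormal

variable {ι : Type*} [Fintype ι] [DecidableEq ι]

lemma sum_smul_vecMulVec_mulVec_of_orthonormal {κ : Type*} [Fintype κ] (lam : ι → ℝ)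
    {v : ι → κ → ℝ} (hv : ∀ i j, v i ⬝ᵥ v j = if i = j then (1 : ℝ) else 0) (j : ι) :
    (∑ i, lam i • vecMulVec (v i) (v i)) *ᵥ v j = lam j • v j := by
  simp [sum_mulVec, smul_mulVec, vecMulVec_mulVec, hv]

lemma sum_sq_dotProduct_of_orthonormal {v : ι → ι → ℝ}
    (hv : ∀ i j, v i ⬝ᵥ v j = if i = j then (1 : ℝ) else 0) (u : ι → ℝ) :
    ∑ i, (v i ⬝ᵥ u) ^ 2 = u ⬝ᵥ u := by
  have hVVt : of v * (of v)ᵀ = 1 := by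
    ext i j
    simpa [mul_apply, dotProduct, one_apply] using hv i j
  calc ∑ i, (v i ⬝ᵥ u) ^ 2 = (of v *ᵥ u) ⬝ᵥ (of v *ᵥ u) := by simp [dotProduct, mulVec, sq]
    _ = u ⬝ᵥ u := by rw [mulVec_dotProduct_mulVec_self, mul_eq_one_comm.mp hVVt, one_mulVec]

end Orthonormal

section SquareRoot

variable {d : ℕ} {M : Matrix (Fin d) (Fin d) ℝ}

lemma msqrt_eq_cfc (h : M.PosSemidef) : msqrt M = cfc Real.sqrt M := by
  rw [h.1.cfc_eq, IsHermitian.cfc, msqrt, dif_pos h, Unitary.conjStarAlgAut_apply]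
  rfl

lemma msqrt_mul_self (h : M.PosSemidef) : msqrt M * msqrt M = M := by
  have hM : IsSelfAdjoint M := h.1
  rw [msqrt_eq_cfc h, ← cfc_mul _ _ M]
  conv_rhs => rw [← cfc_id' ℝ M]
  refine cfc_congr fun x hx => ?_
  obtain ⟨i, rfl⟩ := h.1.spectrum_real_eq_range_eigenvalues ▸ hx
  exact mul_self_sqrt (h.eigenvalues_nonneg i)

lemma msqrt_transpose (h : M.PosSemidef) : (msqrt M)ᵀ = msqrt M := by
  rw [← conjTranspose_eq_transpose_of_trivial, msqrt_eq_cfc h]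
  exact (cfc_predicate Real.sqrt M).star_eq

lemma msqrt_mulVec_dotProduct_msqrt_mulVec (h : M.PosSemidef) (z : Fin d → ℝ) :
    (msqrt M *ᵥ z) ⬝ᵥ (msqrt M *ᵥ z) = z ⬝ᵥ M *ᵥ z := by
  rw [mulVec_dotProduct_mulVec_self, msqrt_transpose h, msqrt_mul_self h]

end SquareRoot

lemma Hmat_posSemidef {n d : ℕ} (A : Matrix (Fin n) (Fin d) ℝ) (ν : ℝ)
    {Λ : Matrix (Fin d) (Fin d) ℝ} (hΛ : Λ.PosSemidef) : (Hmat A ν Λ).PosSemidef := by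
  simpa [Hmat, conjTranspose_eq_transpose_of_trivial] using
    (posSemidef_conjTranspose_mul_self A).add (hΛ.smul (sq_nonneg ν))

theorem stmt7_general {n d m : ℕ}
    (A : Matrix (Fin n) (Fin d) ℝ) (b : Fin d → ℝ)
    (Λ : Matrix (Fin d) (Fin d) ℝ)
    (hΛ : (Λ - 1).PosSemidef) (ν : ℝ)
    (ρ : ℝ) (hρ : ρ ∈ Set.Ioo (0 : ℝ) 1)
    (S : Matrix (Fin m) (Fin n) ℝ)
    (hS : matSpectralNorm (CSmat A ν Λ S - 1) ≤ Real.sqrt ρ)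
    -- eigenvalue decomposition `C_S = Σ_i λ_i v_i v_iᵀ`
    (lam : Fin d → ℝ) (v : Fin d → Fin d → ℝ)
    (hortho : ∀ i j, v i ⬝ᵥ v j = if i = j then (1 : ℝ) else 0)
    (hdecomp : CSmat A ν Λ S = ∑ i, lam i • Matrix.vecMulVec (v i) (v i))
    (x₀ : Fin d → ℝ) :
    ∀ t : ℕ,
      sInf {y : ℝ | ∃ Q : Polynomial ℝ, Q.natDegree ≤ t ∧ Q.eval 0 = 1 ∧
          y = (1 / 2) * ∑ i, (Q.eval (lam i)⁻¹) ^ 2 *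
            (v i ⬝ᵥ (msqrt (Hmat A ν Λ)).mulVec (x₀ - xstar A ν Λ b)) ^ 2}
        ≤ 4 * ((1 - Real.sqrt (1 - ρ)) / (1 + Real.sqrt (1 - ρ))) ^ t *
            deltaEx A ν Λ b x₀ := by
  intro t
  obtain ⟨Q, hdeg, hQ0, hQ⟩ := exists_natDegree_le_eval_zero_eq_one_sq_eval_inv_le hρ t
  have hH : (Hmat A ν Λ).PosSemidef := Hmat_posSemidef A ν (by simpa using hΛ.add .one)
  have hlam : ∀ i, |lam i - 1| ≤ √ρ := fun i =>
    (abs_le_matSpectralNorm_of_mulVec_eq_smul (by simpa using hortho i i) (by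
      rw [sub_mulVec, hdecomp, sum_smul_vecMulVec_mulVec_of_orthonormal lam hortho, one_mulVec,
        sub_smul, one_smul])).trans hS
  set ξ : Fin d → ℝ := fun i => v i ⬝ᵥ msqrt (Hmat A ν Λ) *ᵥ (x₀ - xstar A ν Λ b)
  have hξ : ∑ i, ξ i ^ 2 = 2 * deltaEx A ν Λ b x₀ := by
    rw [sum_sq_dotProduct_of_orthonormal hortho, msqrt_mulVec_dotProduct_msqrt_mulVec hH, deltaEx]
    ring
  refine csInf_le_of_le ⟨0, ?_⟩ ⟨Q, hdeg, hQ0, rfl⟩ ?_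
  · rintro y ⟨P, -, -, rfl⟩
    positivity
  calc (1 / 2) * ∑ i, (Q.eval (lam i)⁻¹) ^ 2 * ξ i ^ 2
      ≤ (1 / 2) * ∑ i, 4 * ((1 - √(1 - ρ)) / (1 + √(1 - ρ))) ^ t * ξ i ^ 2 := by
        gcongr with i
        exact hQ _ (hlam i)
    _ = 4 * ((1 - √(1 - ρ)) / (1 + √(1 - ρ))) ^ t * deltaEx A ν Λ b x₀ := by
        rw [← Finset.mul_sum, hξ]
        ring

/-- If `‖C_S - I‖₂ ≤ √ρ` with `ρ ∈ (0,1)`, then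
`(1/2)·min_{Q, deg Q ≤ t, Q(0)=1} Σ_i Q(1/λ_i)² ξ_i²
  ≤ 4·((1-√(1-ρ))/(1+√(1-ρ)))^t · δ_{x_0}`. -/
theorem stmt7 {n d m : ℕ} (hd : 1 ≤ d) (hdn : d ≤ n)
    (A : Matrix (Fin n) (Fin d) ℝ) (b : Fin d → ℝ)
    (Λ : Matrix (Fin d) (Fin d) ℝ) (hΛdiag : Λ.IsDiag)
    (hΛ : (Λ - 1).PosSemidef) (ν : ℝ) (hν : 0 < ν)
    (ρ : ℝ) (hρ : ρ ∈ Set.Ioo (0 : ℝ) 1)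
    (S : Matrix (Fin m) (Fin n) ℝ)
    (hS : matSpectralNorm (CSmat A ν Λ S - 1) ≤ Real.sqrt ρ)
    -- eigenvalue decomposition `C_S = Σ_i λ_i v_i v_iᵀ`
    (lam : Fin d → ℝ) (v : Fin d → Fin d → ℝ)
    (hortho : ∀ i j, v i ⬝ᵥ v j = if i = j then (1 : ℝ) else 0)
    (hpos : ∀ i, 0 < lam i)
    (hdecomp : CSmat A ν Λ S = ∑ i, lam i • Matrix.vecMulVec (v i) (v i))
    (x₀ : Fin d → ℝ) :
    ∀ t : ℕ,
      sInf {y : ℝ | ∃ Q : Polynomial ℝ, Q.natDegree ≤ t ∧ Q.eval 0 = 1 ∧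
          y = (1 / 2) * ∑ i, (Q.eval (lam i)⁻¹) ^ 2 *
            (v i ⬝ᵥ (msqrt (Hmat A ν Λ)).mulVec (x₀ - xstar A ν Λ b)) ^ 2}
        ≤ 4 * ((1 - Real.sqrt (1 - ρ)) / (1 + Real.sqrt (1 - ρ))) ^ t *
            deltaEx A ν Λ b x₀ :=
  stmt7_general A b Λ hΛ ν ρ hρ S hS lam v hortho hdecomp x₀
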